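/- arXiv:2505.04484 — 3 statements merged into one kernel-verified Lean document; each statement's English description precedes it below -/
import Mathlib

section
/- (Barber–Agakov bound) For discrete X and Z with p(x) > 0, and any conditional proposal q(x|z) > 0, the mutual information satisfies I(X;Z) ≥ E_{(x,z)∼p(x,z)}[log q(x|z)] + H(X), with the gap equal to E_{z∼p(z)}[KL(p(x|z) || q(x|z))] ≥ 0. -/
/-!
Splitting `log (p(x,z) / (p(x) p(z)))` as `log (p(x|z) / q(x|z)) + log q(x|z) - log p(x)` and
averaging over `p(x,z)` writes `I(X;Z)` as the expected divergence plus `E[log q] + H(X)`. The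
divergence terms are nonnegative by Gibbs' inequality, which comes from `x - y ≤ x log (x / y)`,
i.e. `1 - t ≤ -log t`, summed against `q(·|z)`, whose total mass matches that of `p(·|z)`.
-/

open Real Finset

lemma mul_log_div_mul_eq {x m n y : ℝ} (h : x ≠ 0 → m ≠ 0 ∧ n ≠ 0 ∧ y ≠ 0) :
    x * log (x / (m * n)) = x * log (x / n / y) + x * log y - x * log m := by
  rcases eq_or_ne x 0 with rfl | hx
  · simp
  obtain ⟨hm, hn, hy⟩ := h hx
  rw [log_div hx (mul_ne_zero hm hn), log_mul hm hn, log_div (div_ne_zero hx hn) hy,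
    log_div hx hn]
  ring

lemma sub_le_mul_log_div {x y : ℝ} (hx : 0 ≤ x) (hy : 0 ≤ y) (hxy : 0 < x → 0 < y) :
    x - y ≤ x * log (x / y) := by
  rcases hx.eq_or_lt with rfl | hx
  · simpa using hy
  have hy := hxy hx
  calc x - y = x * (1 - (x / y)⁻¹) := by field_simp
    _ ≤ x * log (x / y) := by gcongr; exact one_sub_inv_le_log_of_pos (div_pos hx hy)

theorem sum_sub_sum_le_sum_mul_log_div {ι : Type*} (s : Finset ι) {x y : ι → ℝ}
    (hx : ∀ i ∈ s, 0 ≤ x i) (hy : ∀ i ∈ s, 0 ≤ y i) (hxy : ∀ i ∈ s, 0 < x i → 0 < y i) :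
    ∑ i ∈ s, x i - ∑ i ∈ s, y i ≤ ∑ i ∈ s, x i * log (x i / y i) := by
  rw [← sum_sub_distrib]
  exact sum_le_sum fun i hi => sub_le_mul_log_div (hx i hi) (hy i hi) (hxy i hi)

theorem barber_agakov_bound_general {α β : Type*} [Fintype α] [Fintype β]
    (p : α × β → ℝ) (hp : ∀ z, 0 ≤ p z)
    (q : β → α → ℝ) (hq : ∀ b a, 0 ≤ q b a) (hqs : ∀ b, ∑ a, q b a = 1)
    (hqpos : ∀ a b, 0 < p (a, b) → 0 < q b a) :
    let I := ∑ a, ∑ b, p (a, b) *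
        Real.log (p (a, b) / ((∑ b', p (a, b')) * (∑ a', p (a', b))))
    let H := -(∑ a, (∑ b, p (a, b)) * Real.log (∑ b, p (a, b)))
    let Elogq := ∑ a, ∑ b, p (a, b) * Real.log (q b a)
    let gap := ∑ b, ∑ a, p (a, b) *
        Real.log ((p (a, b) / (∑ a', p (a', b))) / q b a)
    Elogq + H ≤ I ∧ I - (Elogq + H) = gap ∧ 0 ≤ gap := by
  intro I H Elogq gap
  have hrow : ∀ a b, p (a, b) ≤ ∑ b', p (a, b') := fun a b =>
    single_le_sum (fun b' _ => hp (a, b')) (mem_univ b)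
  have hcol : ∀ a b, p (a, b) ≤ ∑ a', p (a', b) := fun a b =>
    single_le_sum (fun a' _ => hp (a', b)) (mem_univ a)
  have hdecomp : I = gap + Elogq + H := calc
    I = ∑ a, ∑ b, (p (a, b) * log (p (a, b) / (∑ a', p (a', b)) / q b a)
          + p (a, b) * log (q b a) - p (a, b) * log (∑ b', p (a, b'))) :=
      sum_congr rfl fun a _ => sum_congr rfl fun b _ => mul_log_div_mul_eq fun h =>
        have hpos := (hp (a, b)).lt_of_ne' h
        ⟨(hpos.trans_le (hrow a b)).ne', (hpos.trans_le (hcol a b)).ne', (hqpos a b hpos).ne'⟩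
    _ = gap + Elogq + H := by
      simp only [sum_add_distrib, sum_sub_distrib, gap, Elogq, H, sum_mul]
      rw [sum_comm (γ := β)]
      ring
  have hgap : 0 ≤ gap := by
    refine sum_nonneg fun b _ => ?_
    have := sum_sub_sum_le_sum_mul_log_div univ (x := fun a => p (a, b))
      (y := fun a => (∑ a', p (a', b)) * q b a)
      (fun a _ => hp (a, b)) (fun a _ => mul_nonneg (sum_nonneg fun a' _ => hp (a', b)) (hq b a))
      (fun a _ h => mul_pos (h.trans_le (hcol a b)) (hqpos a b h))
    simpa only [← mul_sum, hqs, mul_one, sub_self, div_div] using this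
  exact ⟨by linarith, by linarith, hgap⟩

theorem barber_agakov_bound {α β : Type*} [Fintype α] [Fintype β]
    (p : α × β → ℝ) (hp : ∀ z, 0 ≤ p z) (hs : ∑ z, p z = 1)
    (hx : ∀ a, 0 < ∑ b, p (a, b))
    (q : β → α → ℝ) (hq : ∀ b a, 0 ≤ q b a) (hqs : ∀ b, ∑ a, q b a = 1)
    (hqpos : ∀ a b, 0 < p (a, b) → 0 < q b a) :
    let I := ∑ a, ∑ b, p (a, b) *
        Real.log (p (a, b) / ((∑ b', p (a, b')) * (∑ a', p (a', b))))
    let H := -(∑ a, (∑ b, p (a, b)) * Real.log (∑ b, p (a, b)))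
    let Elogq := ∑ a, ∑ b, p (a, b) * Real.log (q b a)
    let gap := ∑ b, ∑ a, p (a, b) *
        Real.log ((p (a, b) / (∑ a', p (a', b))) / q b a)
    Elogq + H ≤ I ∧ I - (Elogq + H) = gap ∧ 0 ≤ gap :=
  barber_agakov_bound_general p hp q hq hqs hqpos
end

section
/- If the variational family q(x|z) = p(x) e^{E(x,z)} / Z(z) with Z(z) = E_{x'∼p(x)}[e^{E(x',z)}] is substituted into the Barber–Agakov bound, the entropy term cancels and one obtains I(X;Z) ≥ E_{(x,z)∼p(x,z)}[E(x,z) - log Z(z)]. -/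
/-!
Let `q(x|z) = p(x) e^{E(x,z)} / Z(z)` and `r(x,z) = q(x|z) p(z)`. For each `z` the weights
`r(·,z)` sum to at most `p(z)`, so `r` has at most the total mass of `p`, and `log (r / p)` is
exactly the gap `E - log Z - log (p(x,z) / (p(x) p(z)))` between the two sides. Gibbs' inequality
`∑ p log (r / p) ≤ 0` is therefore the claim.
-/

open Real Finset

lemma Real.mul_log_div_le_sub {x y : ℝ} (hx : 0 ≤ x) (hy : 0 ≤ y) (hxy : 0 < x → 0 < y) :
    x * log (y / x) ≤ y - x := by
  rcases hx.eq_or_lt with rfl | hx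
  · simpa using hy
  · calc x * log (y / x) ≤ x * (y / x - 1) :=
          mul_le_mul_of_nonneg_left (log_le_sub_one_of_pos (div_pos (hxy hx) hx)) hx.le
      _ = y - x := by field_simp

lemma Real.sum_mul_log_div_nonpos {ι : Type*} (s : Finset ι) {p r : ι → ℝ}
    (hp : ∀ i ∈ s, 0 ≤ p i) (hr : ∀ i ∈ s, 0 ≤ r i) (hpr : ∀ i ∈ s, 0 < p i → 0 < r i)
    (hsum : ∑ i ∈ s, r i ≤ ∑ i ∈ s, p i) :
    ∑ i ∈ s, p i * log (r i / p i) ≤ 0 := by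
  calc ∑ i ∈ s, p i * log (r i / p i) ≤ ∑ i ∈ s, (r i - p i) :=
        sum_le_sum fun i hi => mul_log_div_le_sub (hp i hi) (hr i hi) (hpr i hi)
    _ ≤ 0 := by rw [sum_sub_distrib]; linarith

namespace EnergyBound

variable {α β : Type*}

def fstMarginal [Fintype β] (p : α × β → ℝ) (a : α) : ℝ := ∑ b, p (a, b)

def sndMarginal [Fintype α] (p : α × β → ℝ) (b : β) : ℝ := ∑ a, p (a, b)

noncomputable def partitionFn [Fintype α] [Fintype β] (p : α × β → ℝ) (E : α → β → ℝ) (b : β) :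
    ℝ :=
  ∑ a, fstMarginal p a * exp (E a b)

noncomputable def variationalJoint [Fintype α] [Fintype β] (p : α × β → ℝ) (E : α → β → ℝ)
    (x : α × β) : ℝ :=
  fstMarginal p x.1 * exp (E x.1 x.2) / partitionFn p E x.2 * sndMarginal p x.2

variable {p : α × β → ℝ}

lemma le_fstMarginal [Fintype β] (hp : ∀ x, 0 ≤ p x) (a : α) (b : β) :
    p (a, b) ≤ fstMarginal p a :=
  single_le_sum (f := fun b => p (a, b)) (fun _ _ => hp _) (mem_univ b)

lemma le_sndMarginal [Fintype α] (hp : ∀ x, 0 ≤ p x) (a : α) (b : β) :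
    p (a, b) ≤ sndMarginal p b :=
  single_le_sum (f := fun a => p (a, b)) (fun _ _ => hp _) (mem_univ a)

lemma fstMarginal_nonneg [Fintype β] (hp : ∀ x, 0 ≤ p x) (a : α) : 0 ≤ fstMarginal p a :=
  sum_nonneg fun _ _ => hp _

lemma sndMarginal_nonneg [Fintype α] (hp : ∀ x, 0 ≤ p x) (b : β) : 0 ≤ sndMarginal p b :=
  sum_nonneg fun _ _ => hp _

variable [Fintype α] [Fintype β] (E : α → β → ℝ)

lemma partitionFn_nonneg (hp : ∀ x, 0 ≤ p x) (b : β) : 0 ≤ partitionFn p E b :=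
  sum_nonneg fun a _ => mul_nonneg (fstMarginal_nonneg hp a) (exp_pos _).le

lemma partitionFn_pos (hp : ∀ x, 0 ≤ p x) {a : α} {b : β} (hab : 0 < p (a, b)) :
    0 < partitionFn p E b := by
  have hterm : 0 < fstMarginal p a * exp (E a b) :=
    mul_pos (hab.trans_le (le_fstMarginal hp a b)) (exp_pos _)
  exact hterm.trans_le <| single_le_sum (f := fun a => fstMarginal p a * exp (E a b))
    (fun a _ => mul_nonneg (fstMarginal_nonneg hp a) (exp_pos _).le) (mem_univ a)

lemma variationalJoint_nonneg (hp : ∀ x, 0 ≤ p x) (x : α × β) : 0 ≤ variationalJoint p E x :=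
  mul_nonneg (div_nonneg (mul_nonneg (fstMarginal_nonneg hp _) (exp_pos _).le)
    (partitionFn_nonneg E hp _)) (sndMarginal_nonneg hp _)

lemma variationalJoint_pos (hp : ∀ x, 0 ≤ p x) {x : α × β} (hx : 0 < p x) :
    0 < variationalJoint p E x :=
  mul_pos (div_pos (mul_pos (hx.trans_le (le_fstMarginal hp _ _)) (exp_pos _))
    (partitionFn_pos E hp hx)) (hx.trans_le (le_sndMarginal hp _ _))

lemma sum_variationalJoint_le (hp : ∀ x, 0 ≤ p x) :
    ∑ x, variationalJoint p E x ≤ ∑ x, p x := by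
  simp only [Fintype.sum_prod_type_right, variationalJoint, ← sum_div, ← sum_mul]
  refine sum_le_sum fun b _ => ?_
  calc partitionFn p E b / partitionFn p E b * sndMarginal p b ≤ 1 * sndMarginal p b :=
        mul_le_mul_of_nonneg_right (div_self_le_one _) (sndMarginal_nonneg hp b)
    _ = ∑ a, p (a, b) := one_mul _

lemma mul_log_variationalJoint_div (hp : ∀ x, 0 ≤ p x) (x : α × β) :
    p x * log (variationalJoint p E x / p x) =
      p x * (E x.1 x.2 - log (partitionFn p E x.2)) -
        p x * log (p x / (fstMarginal p x.1 * sndMarginal p x.2)) := by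
  rcases (hp x).eq_or_lt with hx | hx
  · simp [← hx]
  have h1 := hx.trans_le (le_fstMarginal hp x.1 x.2)
  have h2 := hx.trans_le (le_sndMarginal hp x.1 x.2)
  have hZ := partitionFn_pos E hp hx
  rw [variationalJoint, log_div (by positivity) hx.ne', log_div hx.ne' (by positivity),
    log_mul (by positivity) h2.ne', log_div (by positivity) hZ.ne', log_mul h1.ne' (exp_pos _).ne',
    log_exp, log_mul h1.ne' h2.ne']
  ring

end EnergyBound

open EnergyBound in
theorem energy_based_mi_lower_bound_general {α β : Type*} [Fintype α] [Fintype β]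
    (p : α × β → ℝ) (hp : ∀ z, 0 ≤ p z)
    (E : α → β → ℝ) :
    (∑ a, ∑ b, p (a, b) *
        (E a b - Real.log (∑ a', (∑ b', p (a', b')) * Real.exp (E a' b))))
      ≤ ∑ a, ∑ b, p (a, b) *
          Real.log (p (a, b) / ((∑ b', p (a, b')) * (∑ a', p (a', b)))) := by
  have gibbs : ∑ x, p x * log (variationalJoint p E x / p x) ≤ 0 :=
    sum_mul_log_div_nonpos _ (fun x _ => hp x) (fun x _ => variationalJoint_nonneg E hp x)
      (fun x _ => variationalJoint_pos E hp) (sum_variationalJoint_le E hp)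
  simp only [mul_log_variationalJoint_div E hp, sum_sub_distrib, sub_nonpos,
    Fintype.sum_prod_type] at gibbs
  exact gibbs

theorem energy_based_mi_lower_bound {α β : Type*} [Fintype α] [Fintype β]
    (p : α × β → ℝ) (hp : ∀ z, 0 ≤ p z) (hs : ∑ z, p z = 1)
    (hx : ∀ a, 0 < ∑ b, p (a, b))
    (E : α → β → ℝ) :
    (∑ a, ∑ b, p (a, b) *
        (E a b - Real.log (∑ a', (∑ b', p (a', b')) * Real.exp (E a' b))))
      ≤ ∑ a, ∑ b, p (a, b) *
          Real.log (p (a, b) / ((∑ b', p (a, b')) * (∑ a', p (a', b)))) :=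
  energy_based_mi_lower_bound_general p hp E
end

section
/- (Multi-sample/InfoNCE-style bound) Let (X₁,Z₁),...,(Xₙ,Zₙ) be i.i.d. pairs with discrete finite ranges, and E(x,z) any real-valued critic. Then I(X₁;Z₁) ≥ E[ (1/n) Σᵢ log( e^{E(Xᵢ,Zᵢ)} / ((1/n) Σⱼ e^{E(Xⱼ,Zᵢ)}) ) ]. -/
/-! For each `i`, the expectation of the pointwise mutual information of `(Xᵢ, Zᵢ)` is `I(X;Z)`.
Subtracting it from the `i`-th InfoNCE term leaves the logarithm of a likelihood ratio `u`, and
`log u ≤ u - 1` bounds the expected difference by `mᵢ - 1`, where `mᵢ` is the mass of the weight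
obtained from the sample law by replacing `p(xᵢ, zᵢ)` with `p(xᵢ) p(zᵢ)` and tilting by the critic
ratio `n e^{E(xᵢ,zᵢ)} / ∑ⱼ e^{E(xⱼ,zᵢ)}`. For fixed `x₁, …, xₙ` and `z` these ratios sum to `n` over
`i`, so `∑ᵢ mᵢ = n` and the differences average to at most `0`. -/

open Finset Real

section SingleCoordinate

variable {ι κ R : Type*} [Fintype ι] [DecidableEq ι] [Fintype κ] [CommSemiring R]

theorem sum_pi_prod_erase_mul (f : ι → κ → R) (h : κ → R) (i : ι) :
    ∑ z : ι → κ, (∏ j ∈ univ.erase i, f j (z j)) * h (z i)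
      = (∏ j ∈ univ.erase i, ∑ k, f j k) * ∑ k, h k := by
  have split_off (g : ι → R) (v : R) :
      ∏ j, Function.update g i v j = (∏ j ∈ univ.erase i, g j) * v := by
    rw [← prod_erase_mul _ _ (mem_univ i), Function.update_self]
    exact congrArg (· * v)
      (prod_congr rfl fun j hj => Function.update_of_ne (ne_of_mem_erase hj) _ _)
  calc ∑ z : ι → κ, (∏ j ∈ univ.erase i, f j (z j)) * h (z i)
      = ∑ z : ι → κ, ∏ j, Function.update f i h j (z j) := by
        refine sum_congr rfl fun z _ => ?_
        rw [← split_off (fun j => f j (z j)) (h (z i))]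
        exact prod_congr rfl fun j _ => by
          rcases eq_or_ne j i with rfl | hj <;> simp [Function.update_of_ne, *]
    _ = ∏ j, ∑ k, Function.update f i h j k := (Fintype.prod_sum _).symm
    _ = _ := by
        rw [← split_off (fun j => ∑ k, f j k) (∑ k, h k)]
        exact prod_congr rfl fun j _ => by
          rcases eq_or_ne j i with rfl | hj <;> simp [Function.update_of_ne, *]

theorem sum_pi_prod_mul_apply (p : κ → R) (hs : ∑ k, p k = 1) (F : κ → R) (i : ι) :
    ∑ s : ι → κ, (∏ j, p (s j)) * F (s i) = ∑ k, p k * F k := by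
  simp_rw [← prod_erase_mul _ _ (mem_univ i), mul_assoc]
  rw [sum_pi_prod_erase_mul (fun _ => p) (fun k => p k * F k) i]
  simp [hs]

theorem sum_pi_prod_erase_mul_snd {α β : Type*} [Fintype α] [Fintype β]
    (p : α × β → R) (G : (ι → α) → β → R) (i : ι) :
    ∑ s : ι → α × β, (∏ j ∈ univ.erase i, p (s j)) * G (fun j => (s j).1) (s i).2
      = ∑ x : ι → α, (∏ j ∈ univ.erase i, ∑ b, p (x j, b)) * ∑ b, G x b := by
  rw [← (Equiv.arrowProdEquivProdArrow ι (fun _ => α) (fun _ => β)).symm.sum_comp,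
    Fintype.sum_prod_type]
  exact sum_congr rfl fun x _ => sum_pi_prod_erase_mul (fun j b => p (x j, b)) (G x) i

end SingleCoordinate

section InfoNCE

variable {α β : Type*}

def fstMarginal [Fintype β] (p : α × β → ℝ) (a : α) : ℝ := ∑ b, p (a, b)

def sndMarginal [Fintype α] (p : α × β → ℝ) (b : β) : ℝ := ∑ a, p (a, b)

theorem sum_fstMarginal [Fintype α] [Fintype β] {p : α × β → ℝ} (hs : ∑ w, p w = 1) :
    ∑ a, fstMarginal p a = 1 := by
  rw [← hs, Fintype.sum_prod_type]; rfl

theorem sum_sndMarginal [Fintype α] [Fintype β] {p : α × β → ℝ} (hs : ∑ w, p w = 1) :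
    ∑ b, sndMarginal p b = 1 := by
  rw [← hs, Fintype.sum_prod_type, sum_comm]; rfl

theorem le_fstMarginal [Fintype β] {p : α × β → ℝ} (hp : ∀ w, 0 ≤ p w) (w : α × β) :
    p w ≤ fstMarginal p w.1 :=
  single_le_sum (f := fun b => p (w.1, b)) (fun _ _ => hp _) (mem_univ w.2)

theorem le_sndMarginal [Fintype α] {p : α × β → ℝ} (hp : ∀ w, 0 ≤ p w) (w : α × β) :
    p w ≤ sndMarginal p w.2 :=
  single_le_sum (f := fun a => p (a, w.2)) (fun _ _ => hp _) (mem_univ w.1)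

noncomputable def pmi [Fintype α] [Fintype β] (p : α × β → ℝ) (w : α × β) : ℝ :=
  log (p w / (fstMarginal p w.1 * sndMarginal p w.2))

noncomputable def nceRatio {n : ℕ} (g : Fin n → ℝ) (i : Fin n) : ℝ :=
  exp (g i) / ((1 / (n : ℝ)) * ∑ j, exp (g j))

theorem nceRatio_pos {n : ℕ} (g : Fin n → ℝ) (i : Fin n) : 0 < nceRatio g i := by
  have : 0 < ∑ j, exp (g j) := sum_pos (fun j _ => exp_pos (g j)) ⟨i, mem_univ i⟩
  have : (0 : ℝ) < n := by exact_mod_cast i.pos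
  unfold nceRatio
  positivity

theorem sum_nceRatio {n : ℕ} (g : Fin n → ℝ) : ∑ i, nceRatio g i = n := by
  rcases Nat.eq_zero_or_pos n with rfl | hn
  · simp
  have : 0 < ∑ j, exp (g j) := sum_pos (fun j _ => exp_pos (g j)) ⟨⟨0, hn⟩, mem_univ _⟩
  unfold nceRatio
  rw [← sum_div]
  field_simp

noncomputable def nceDecoupled [Fintype α] [Fintype β] (p : α × β → ℝ) (Ec : α → β → ℝ)
    {n : ℕ} (i : Fin n) (s : Fin n → α × β) : ℝ :=
  (∏ j ∈ univ.erase i, p (s j)) *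
    (fstMarginal p (s i).1 * sndMarginal p (s i).2 * nceRatio (fun j => Ec (s j).1 (s i).2) i)

theorem sum_nceDecoupled [Fintype α] [Fintype β] (p : α × β → ℝ) (Ec : α → β → ℝ)
    {n : ℕ} (i : Fin n) :
    ∑ s, nceDecoupled p Ec i s
      = ∑ x : Fin n → α, (∏ j, fstMarginal p (x j)) *
          ∑ b, sndMarginal p b * nceRatio (fun j => Ec (x j) b) i := by
  unfold nceDecoupled
  rw [sum_pi_prod_erase_mul_snd p
    (fun x b => fstMarginal p (x i) * sndMarginal p b * nceRatio (fun j => Ec (x j) b) i) i]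
  refine sum_congr rfl fun x _ => ?_
  rw [← prod_erase_mul _ _ (mem_univ i)]
  simp only [mul_assoc, ← mul_sum]
  rfl

theorem sum_sum_nceDecoupled [Fintype α] [Fintype β] {p : α × β → ℝ} (hs : ∑ w, p w = 1)
    (Ec : α → β → ℝ) (n : ℕ) :
    ∑ i : Fin n, ∑ s, nceDecoupled p Ec i s = n := by
  calc ∑ i : Fin n, ∑ s, nceDecoupled p Ec i s
      = ∑ x : Fin n → α, (∏ j, fstMarginal p (x j)) *
          ∑ b, sndMarginal p b * ∑ i, nceRatio (fun j => Ec (x j) b) i := by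
        simp_rw [sum_nceDecoupled, mul_sum]
        rw [sum_comm]
        exact sum_congr rfl fun x _ => sum_comm
    _ = (∑ x : Fin n → α, ∏ j, fstMarginal p (x j)) * (∑ b, sndMarginal p b) * n := by
        simp_rw [sum_nceRatio, ← sum_mul, mul_assoc]
    _ = n := by rw [← Fintype.sum_pow, sum_fstMarginal hs, sum_sndMarginal hs]; simp

theorem prod_mul_log_nceRatio_le [Fintype α] [Fintype β] {p : α × β → ℝ} (hp : ∀ w, 0 ≤ p w)
    (Ec : α → β → ℝ) {n : ℕ} (i : Fin n) (s : Fin n → α × β) :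
    (∏ j, p (s j)) * log (nceRatio (fun j => Ec (s j).1 (s i).2) i)
      ≤ (∏ j, p (s j)) * pmi p (s i) + (nceDecoupled p Ec i s - ∏ j, p (s j)) := by
  have hr := nceRatio_pos (fun j => Ec (s j).1 (s i).2) i
  rcases (prod_nonneg fun j _ => hp (s j)).eq_or_lt with hP | hP
  · have hX := (hp (s i)).trans (le_fstMarginal hp (s i))
    have hZ := (hp (s i)).trans (le_sndMarginal hp (s i))
    have := prod_nonneg fun j (_ : j ∈ univ.erase i) => hp (s j)
    rw [← hP, zero_mul, zero_mul, zero_add, sub_zero]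
    unfold nceDecoupled
    positivity
  have hpi : 0 < p (s i) :=
    (hp _).lt_of_ne (prod_ne_zero_iff.mp hP.ne' i (mem_univ i)).symm
  have hX := hpi.trans_le (le_fstMarginal hp (s i))
  have hZ := hpi.trans_le (le_sndMarginal hp (s i))
  set r := nceRatio (fun j => Ec (s j).1 (s i).2) i
  set u := r * (fstMarginal p (s i).1 * sndMarginal p (s i).2) / p (s i) with hu
  have hlog : log r = log u + pmi p (s i) := by
    unfold pmi
    rw [← log_mul (by positivity) (by positivity), hu]
    congr 1
    field_simp
  have hQ : nceDecoupled p Ec i s = (∏ j, p (s j)) * u := by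
    unfold nceDecoupled
    rw [← prod_erase_mul _ _ (mem_univ i), hu]
    field_simp
    rfl
  calc (∏ j, p (s j)) * log r = (∏ j, p (s j)) * log u + (∏ j, p (s j)) * pmi p (s i) := by
        rw [hlog, mul_add]
    _ ≤ (∏ j, p (s j)) * (u - 1) + (∏ j, p (s j)) * pmi p (s i) := by
        gcongr
        exact log_le_sub_one_of_pos (by positivity)
    _ = _ := by rw [hQ]; ring

end InfoNCE

theorem infoNCE_lower_bound {α β : Type*} [Fintype α] [Fintype β]
    (p : α × β → ℝ) (hp : ∀ z, 0 ≤ p z) (hs : ∑ z, p z = 1)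
    (n : ℕ) (hn : 0 < n) (Ec : α → β → ℝ) :
    (∑ s : Fin n → α × β, (∏ i, p (s i)) *
        ((1 / (n : ℝ)) * ∑ i, Real.log
          (Real.exp (Ec (s i).1 (s i).2) /
            ((1 / (n : ℝ)) * ∑ j, Real.exp (Ec (s j).1 (s i).2)))))
      ≤ ∑ a, ∑ b, p (a, b) *
          Real.log (p (a, b) / ((∑ b', p (a, b')) * (∑ a', p (a', b)))) := by
  have hn' : (n : ℝ) ≠ 0 := by positivity
  have hmass : ∑ s : Fin n → α × β, ∏ j, p (s j) = 1 := by rw [← Fintype.sum_pow, hs, one_pow]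
  calc _ = (1 / (n : ℝ)) * ∑ i : Fin n, ∑ s : Fin n → α × β,
          (∏ j, p (s j)) * log (nceRatio (fun j => Ec (s j).1 (s i).2) i) := by
        conv_rhs => rw [sum_comm, mul_sum]
        refine sum_congr rfl fun s _ => ?_
        rw [← mul_sum]
        unfold nceRatio
        ring
    _ ≤ (1 / (n : ℝ)) * ∑ i : Fin n, ∑ s : Fin n → α × β,
          ((∏ j, p (s j)) * pmi p (s i) + (nceDecoupled p Ec i s - ∏ j, p (s j))) := by
        gcongr with i _ s _
        exact prod_mul_log_nceRatio_le hp Ec i s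
    _ = ∑ w, p w * pmi p w := by
        simp_rw [sum_add_distrib, sum_sub_distrib, sum_pi_prod_mul_apply p hs, hmass]
        rw [sum_sum_nceDecoupled hs]
        simp only [sum_const, card_univ, Fintype.card_fin, nsmul_eq_mul, mul_one, sub_self,
          add_zero]
        field_simp
    _ = _ := Fintype.sum_prod_type fun w => p w * pmi p w
end
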